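/- Let {φ_ξ}_{ξ∈X} be an equivariant measurable field of states on F. Then there exists a ν-measurable set F ⊆ X of full measure such that for every ξ ∈ F the stabilizer G_{φ_ξ} := {g ∈ G : φ_ξ ∘ γ_g = φ_ξ} of the individual state equals the stabilizer of the field, G_φ := {g ∈ G : for every A ∈ F, φ_ξ(γ_g(A)) = φ_ξ(A) for ν-a.e. ξ}. -/

import Mathlib

open Filter MeasureTheory Topology
open scoped ComplexOrder

/-- The box `Λ_N = {0, …, N−1}^d ⊂ ℤ^d`. -/
noncomputable def box (d N : ℕ) : Finset (Fin d → ℤ) := Finset.Icc 0 (fun _ => (N : ℤ) - 1)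

/-- A state on a unital C*-algebra: a positive unital continuous linear functional. -/
def IsState {F : Type*} [NormedRing F] [StarRing F] [NormedAlgebra ℂ F]
    (φ : F →L[ℂ] ℂ) : Prop :=
  φ 1 = 1 ∧ ∀ A, 0 ≤ φ (star A * A)

/-- A bounded measurable (`L^∞`) complex-valued function. -/
def IsBddMeasurable {X : Type*} [MeasurableSpace X] (f : X → ℂ) : Prop :=
  Measurable f ∧ ∃ C, ∀ ξ, ‖f ξ‖ ≤ C

/-- A measurable field of states. -/
def IsStateField {X F : Type*} [MeasurableSpace X] [NormedRing F] [StarRing F]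
    [NormedAlgebra ℂ F] (φ : X → F →L[ℂ] ℂ) : Prop :=
  (∀ ξ, IsState (φ ξ)) ∧ ∀ A, Measurable fun ξ => φ ξ A

/-- Equivariance (for a.e. ξ) of a field of states w.r.t. the spatial translations. -/
def Equivariant {X F : Type*} [MeasurableSpace X] [NormedRing F] [NormedAlgebra ℂ F]
    {d : ℕ} (ν : Measure X) (T : (Fin d → ℤ) → X → X) (α : (Fin d → ℤ) → F → F)
    (φ : X → F →L[ℂ] ℂ) : Prop :=
  ∀ᵐ ξ ∂ν, ∀ (x : Fin d → ℤ) (A : F), φ ξ (α x A) = φ (T (-x) ξ) A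

/-- A measure-preserving ergodic action of `ℤ^d` on `(X, ν)`. -/
def ErgodicAction {X : Type*} [MeasurableSpace X] {d : ℕ} (ν : Measure X)
    (T : (Fin d → ℤ) → X → X) : Prop :=
  (∀ x, MeasurePreserving (T x) ν ν) ∧ T 0 = id ∧ (∀ x y, T (x + y) = T x ∘ T y) ∧
    ∀ S : Set X, MeasurableSet S → (∀ x, T x ⁻¹' S = S) → ν S = 0 ∨ ν S = 1

/-- Weak clustering of a field of states w.r.t. the spatial translations. -/
def WeaklyClustering {X F : Type*} [MeasurableSpace X] [NormedRing F] [NormedAlgebra ℂ F]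
    (d : ℕ) (ν : Measure X) (T : (Fin d → ℤ) → X → X) (α : (Fin d → ℤ) → F → F)
    (φ : X → F →L[ℂ] ℂ) : Prop :=
  ∀ (A B : F) (f g : X → ℂ), IsBddMeasurable f → IsBddMeasurable g →
    Tendsto (fun N : ℕ => ((N : ℂ) ^ d)⁻¹ *
        ∑ x ∈ box d N, ∫ ξ, f ξ * g (T (-x) ξ) * φ ξ (A * α x B) ∂ν)
      atTop (nhds ((∫ ξ, f ξ * φ ξ A ∂ν) * (∫ ξ, g ξ * φ ξ B ∂ν)))

/-- Asymptotic abelianness of a field of states, w.r.t. a grading `σ`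
(with `ε_{A,B} = −1` iff both `A`, `B` are odd, encoded by the two clauses). -/
def AsympAbelian {X F : Type*} [MeasurableSpace X] [NormedRing F] [NormedAlgebra ℂ F]
    (d : ℕ) (ν : Measure X) (T : (Fin d → ℤ) → X → X) (α : (Fin d → ℤ) → F → F)
    (σ : F → F) (φ : X → F →L[ℂ] ℂ) : Prop :=
  ∀ A B : F, (σ A = A ∨ σ A = -A) → (σ B = B ∨ σ B = -B) → ∀ C D : F,
    ∀ f g h k : X → ℂ, IsBddMeasurable f → IsBddMeasurable g → IsBddMeasurable h →
      IsBddMeasurable k →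
      (¬(σ A = -A ∧ σ B = -B) →
        Tendsto (fun x : Fin d → ℤ =>
            ∫ ξ, h ξ * f (T (-x) ξ) * g ξ * k ξ * φ ξ (C * (α x A * B - B * α x A) * D) ∂ν)
          cofinite (nhds 0)) ∧
      ((σ A = -A ∧ σ B = -B) →
        Tendsto (fun x : Fin d → ℤ =>
            ∫ ξ, h ξ * f (T (-x) ξ) * g ξ * k ξ * φ ξ (C * (α x A * B + B * α x A) * D) ∂ν)
          cofinite (nhds 0))

/-- The β-KMS condition for a state `ψ` w.r.t. a one-parameter family `θ` of maps. -/
def IsKMS {F : Type*} [NormedRing F] [StarRing F] [NormedAlgebra ℂ F] (β : ℝ)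
    (θ : ℝ → F → F) (ψ : F →L[ℂ] ℂ) : Prop :=
  ∀ A B : F, ∃ Φ : ℂ → ℂ,
    ContinuousOn Φ {z : ℂ | z.im ∈ Set.Icc (min 0 β) (max 0 β)} ∧
    (∃ C, ∀ z ∈ {z : ℂ | z.im ∈ Set.Icc (min 0 β) (max 0 β)}, ‖Φ z‖ ≤ C) ∧
    (∀ z ∈ {z : ℂ | z.im ∈ Set.Ioo (min 0 β) (max 0 β)}, DifferentiableAt ℂ Φ z) ∧
    (∀ t : ℝ, Φ t = ψ (A * θ t B)) ∧
    (∀ t : ℝ, Φ (t + Complex.I * β) = ψ (θ t B * A))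

/-- The field `{φ_ξ}` restricts to a β-KMS state on the set `Obs` of observables. -/
def FieldKMS {X F : Type*} [MeasurableSpace X] [NormedRing F] [StarRing F]
    [NormedAlgebra ℂ F] (β : ℝ) (ν : Measure X) (τ : ℝ → X → F → F) (Obs : Set F)
    (φ : X → F →L[ℂ] ℂ) : Prop :=
  ∀ A ∈ Obs, ∀ B ∈ Obs, ∀ f : X → ℂ, IsBddMeasurable f →
    ∃ Φ : ℂ → ℂ,
      ContinuousOn Φ {z : ℂ | z.im ∈ Set.Icc (min 0 β) (max 0 β)} ∧
      (∃ C, ∀ z ∈ {z : ℂ | z.im ∈ Set.Icc (min 0 β) (max 0 β)}, ‖Φ z‖ ≤ C) ∧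
      (∀ z ∈ {z : ℂ | z.im ∈ Set.Ioo (min 0 β) (max 0 β)}, DifferentiableAt ℂ Φ z) ∧
      (∀ t : ℝ, Φ t = ∫ ξ, f ξ * φ ξ (A * τ t ξ B) ∂ν) ∧
      (∀ t : ℝ, Φ (t + Complex.I * β) = ∫ ξ, f ξ * φ ξ (τ t ξ B * A) ∂ν)

/-!
The stabilizer `G_{φ_ξ}` is a closed subset of the compact metric space `G`, and equivariance
makes it constant along `T`-orbits, because `φ_{T_x ξ} = φ_ξ ∘ α_{-x}` and `α_{-x}` commutes
with every `γ_g`. A closed set is determined by which of the countably many closed balls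
`B(D j, 1/(m+1))` around a dense sequence `D` it meets. Testing on a dense sequence in `F` and
using compactness of `G`, each of these events is measurable in `ξ`, so by ergodicity it has
measure `0` or `1`. Hence `ξ ↦ G_{φ_ξ}` is a.e. constant, and the constant value is `G_φ`,
since `g ∈ G_φ` iff `g ∈ G_{φ_ξ}` for a.e. `ξ`.
-/

open Metric

section ClosedSets

variable {G : Type*} [PseudoMetricSpace G] {D : ℕ → G}

theorem subset_of_nonempty_inter_closedBall_imp (hD : DenseRange D) {K L : Set G}
    (hL : IsClosed L)
    (h : ∀ j (m : ℕ), (K ∩ closedBall (D j) (1 / (m + 1))).Nonempty →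
      (L ∩ closedBall (D j) (1 / (m + 1))).Nonempty) :
    K ⊆ L := by
  intro g hg
  refine hL.closure_subset (Metric.mem_closure_iff.2 fun δ hδ => ?_)
  obtain ⟨m, hm⟩ := exists_nat_one_div_lt (half_pos hδ)
  obtain ⟨j, hj⟩ := denseRange_iff.1 hD g _ (Nat.one_div_pos_of_nat (n := m))
  obtain ⟨b, hbL, hb⟩ := h j m ⟨g, hg, mem_closedBall.2 hj.le⟩
  refine ⟨b, hbL, ?_⟩
  calc dist g b ≤ dist g (D j) + dist (D j) b := dist_triangle _ _ _
    _ < δ / 2 + δ / 2 := add_lt_add_of_lt_of_le (hj.trans hm) ((mem_closedBall'.1 hb).trans hm.le)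
    _ = δ := add_halves δ

variable [CompactSpace G] {E : Type*} [NormedAddCommGroup E]

theorem nonempty_inter_closedBall_iff_of_denseRange (hD : DenseRange D) {f : ℕ → G → E}
    (hf : ∀ n, Continuous (f n)) (c : G) (r : ℝ) :
    ({g | ∀ n, f n g = 0} ∩ closedBall c r).Nonempty ↔
      ∀ s : ℕ, ∃ j, dist (D j) c < r + 1 / (s + 1) ∧ ∀ n < s, ‖f n (D j)‖ < 1 / (s + 1) := by
  constructor
  · rintro ⟨g, hg, hgc⟩ s
    have hε : (0 : ℝ) < 1 / (s + 1) := Nat.one_div_pos_of_nat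
    have hnear : ∀ᶠ g' in 𝓝 g, g' ∈ ball c (r + 1 / (s + 1)) ∧
        ∀ n ∈ Set.Iio s, ‖f n g'‖ < 1 / (s + 1) := by
      refine Filter.Eventually.and (isOpen_ball.mem_nhds ?_) ((eventually_all_finite
        (Set.finite_Iio s)).2 fun n _ =>
          ((hf n).tendsto g).norm.eventually_lt_const (by simpa [hg n] using hε))
      exact mem_ball.2 ((mem_closedBall.1 hgc).trans_lt (lt_add_of_pos_right r hε))
    obtain ⟨_, ⟨hball, hsmall⟩, j, rfl⟩ := mem_closure_iff_nhds.1 (hD g) _ hnear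
    exact ⟨j, hball, hsmall⟩
  · intro h
    choose j hj using h
    obtain ⟨g, -, ψ, hψ, hlim⟩ :=
      isCompact_univ.tendsto_subseq (x := D ∘ j) fun _ => Set.mem_univ _
    have hε : Tendsto (fun k => (1 : ℝ) / (ψ k + 1)) atTop (𝓝 0) :=
      tendsto_one_div_add_atTop_nhds_zero_nat.comp hψ.tendsto_atTop
    refine ⟨g, fun n => norm_le_zero_iff.1 ?_, mem_closedBall.2 ?_⟩
    · refine le_of_tendsto_of_tendsto (((hf n).tendsto g).comp hlim).norm hε ?_
      filter_upwards [eventually_gt_atTop n] with k hk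
      exact ((hj (ψ k)).2 n (hk.trans_le (hψ.id_le k))).le
    · have := le_of_tendsto_of_tendsto (hlim.dist tendsto_const_nhds)
        (tendsto_const_nhds.add hε) (Eventually.of_forall fun k => (hj (ψ k)).1.le)
      simpa using this

theorem measurableSet_setOf_nonempty_inter_closedBall {X : Type*} [MeasurableSpace X]
    [MeasurableSpace E] [OpensMeasurableSpace E] (hD : DenseRange D) {f : ℕ → X → G → E}
    (hcont : ∀ n ξ, Continuous (f n ξ)) (hmeas : ∀ n g, Measurable fun ξ => f n ξ g)
    (c : G) (r : ℝ) :
    MeasurableSet {ξ | ({g | ∀ n, f n ξ g = 0} ∩ closedBall c r).Nonempty} := by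
  simp_rw [nonempty_inter_closedBall_iff_of_denseRange hD (fun n => hcont n _)]
  refine measurableSet_setOfPred.2 <| Measurable.forall fun s => Measurable.exists fun j =>
    measurable_const.and <| Measurable.forall fun n => measurable_const.imp ?_
  exact measurableSet_setOfPred.1 (measurableSet_lt (hmeas n (D j)).norm measurable_const)

end ClosedSets

section Ergodic

variable {X : Type*} [MeasurableSpace X] {ν : Measure X}

theorem ae_ae_forall_iff_of_forall_ae_or_ae_not {ι : Type*} [Countable ι] {p : ι → X → Prop}
    (h : ∀ i, (∀ᵐ ξ ∂ν, p i ξ) ∨ ∀ᵐ ξ ∂ν, ¬p i ξ) :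
    ∀ᵐ ξ ∂ν, ∀ᵐ ξ' ∂ν, ∀ i, (p i ξ ↔ p i ξ') := by
  have : ∀ᵐ ξ ∂ν, ∀ i, ∀ᵐ ξ' ∂ν, (p i ξ ↔ p i ξ') := by
    refine ae_all_iff.2 fun i => ?_
    rcases h i with hi | hi <;>
    · filter_upwards [hi] with ξ hξ
      filter_upwards [hi] with ξ' hξ'
      simp only [hξ, hξ']
  filter_upwards [this] with ξ hξ using ae_all_iff.2 hξ

theorem ae_eq_setOf_ae_mem_of_ae_ae_eq [NeZero ν] {G : Type*} {K : X → Set G}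
    (h : ∀ᵐ ξ ∂ν, ∀ᵐ ξ' ∂ν, K ξ = K ξ') :
    ∀ᵐ ξ ∂ν, K ξ = {g | ∀ᵐ ξ' ∂ν, g ∈ K ξ'} := by
  filter_upwards [h] with ξ hξ
  ext g
  refine ⟨fun hg => hξ.mono fun ξ' h => h ▸ hg, fun hg => ?_⟩
  obtain ⟨ξ', hξξ', hg'⟩ := (hξ.and hg).exists
  exact hξξ' ▸ hg'

variable [IsProbabilityMeasure ν] {d : ℕ} {T : (Fin d → ℤ) → X → X}

theorem ErgodicAction.ae_or_ae_not (hT : ErgodicAction ν T) {p : X → Prop}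
    (hp : MeasurableSet {ξ | p ξ}) (hinv : ∀ᵐ ξ ∂ν, ∀ x, p (T x ξ) ↔ p ξ) :
    (∀ᵐ ξ ∂ν, p ξ) ∨ ∀ᵐ ξ ∂ν, ¬p ξ := by
  obtain ⟨hpres, hT0, hTadd, herg⟩ := hT
  obtain ⟨U, hU_ae, hU_meas, hU⟩ := hinv.exists_measurable_mem
  -- `herg` needs strict invariance: restrict to the points whose whole orbit lies in `U`.
  set E := ⋂ x, T x ⁻¹' U
  have hE_meas : MeasurableSet E := MeasurableSet.iInter fun x => (hpres x).measurable hU_meas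
  have hE_ae : ∀ᵐ ξ ∂ν, ξ ∈ E := (ae_all_iff.2 fun x =>
    (hpres x).quasiMeasurePreserving.ae (p := (· ∈ U)) hU_ae).mono fun _ h => by
    simpa only [E, Set.mem_iInter, Set.mem_preimage] using h
  have hE_inv : ∀ y, T y ⁻¹' E = E := fun y => by
    ext ξ
    simp only [E, Set.mem_preimage, Set.mem_iInter, ← Function.comp_apply (f := T _),
      ← hTadd]
    exact (Equiv.addRight y).forall_congr_right (q := fun z => T z ξ ∈ U)
  have hS_inv : ∀ y, T y ⁻¹' (E ∩ {ξ | p ξ}) = E ∩ {ξ | p ξ} := fun y => by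
    ext ξ
    simp only [Set.preimage_inter, hE_inv, Set.mem_inter_iff, Set.mem_preimage,
      Set.mem_ofPred_eq, and_congr_right_iff]
    intro hξ
    simpa [hT0] using hU _ (Set.mem_iInter.1 hξ 0) y
  rcases herg _ (hE_meas.inter hp) hS_inv with h0 | h1
  · right
    filter_upwards [measure_eq_zero_iff_ae_notMem.1 h0, hE_ae] with ξ hS hE hpξ
    exact hS ⟨hE, hpξ⟩
  · left
    filter_upwards [(ae_mem_iff_measure_eq (hE_meas.inter hp).nullMeasurableSet).2
      (h1.trans measure_univ.symm)] with ξ hξ using hξ.2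

theorem ErgodicAction.ae_ae_eq_of_isClosed (hT : ErgodicAction ν T) {G : Type*}
    [PseudoMetricSpace G] {D : ℕ → G} (hD : DenseRange D) {K : X → Set G}
    (hK : ∀ ξ, IsClosed (K ξ))
    (hmeas : ∀ c r, MeasurableSet {ξ | (K ξ ∩ closedBall c r).Nonempty})
    (hinv : ∀ᵐ ξ ∂ν, ∀ x, K (T x ξ) = K ξ) :
    ∀ᵐ ξ ∂ν, ∀ᵐ ξ' ∂ν, K ξ = K ξ' := by
  have hball : ∀ i : ℕ × ℕ,
      (∀ᵐ ξ ∂ν, (K ξ ∩ closedBall (D i.1) (1 / (i.2 + 1))).Nonempty) ∨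
        ∀ᵐ ξ ∂ν, ¬(K ξ ∩ closedBall (D i.1) (1 / (i.2 + 1))).Nonempty :=
    fun i => hT.ae_or_ae_not (hmeas _ _) (hinv.mono fun ξ h x => by rw [h x])
  filter_upwards [ae_ae_forall_iff_of_forall_ae_or_ae_not hball] with ξ hξ
  filter_upwards [hξ] with ξ' h
  exact (subset_of_nonempty_inter_closedBall_imp hD (hK ξ') fun j m => (h (j, m)).1).antisymm
    (subset_of_nonempty_inter_closedBall_imp hD (hK ξ) fun j m => (h (j, m)).2)

end Ergodic

section Stabilizer

variable {G M E : Type*}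

def stateStabilizer (γ : G → M → M) (ψ : M → E) : Set G :=
  {g | ∀ A, ψ (γ g A) = ψ A}

theorem stateStabilizer_comp_equiv (γ : G → M → M) (ψ : M → E) (σ : M ≃ M)
    (hσ : ∀ g A, γ g (σ A) = σ (γ g A)) :
    stateStabilizer γ (ψ ∘ σ) = stateStabilizer γ ψ := by
  ext g
  simp only [stateStabilizer, Set.mem_ofPred_eq, Function.comp_apply, ← hσ]
  exact σ.forall_congr_right (q := fun B => ψ (γ g B) = ψ B)

variable [TopologicalSpace M] {γ : G → M → M} {A : ℕ → M}

section

variable [TopologicalSpace E] [T2Space E]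

theorem mem_stateStabilizer_iff_of_denseRange {ψ : M → E} (hA : DenseRange A) {g : G}
    (hγ : Continuous (γ g)) (hψ : Continuous ψ) :
    g ∈ stateStabilizer γ ψ ↔ ∀ n, ψ (γ g (A n)) = ψ (A n) :=
  ⟨fun h n => h (A n), fun h => congrFun (hA.equalizer (hψ.comp hγ) hψ (funext h))⟩

theorem isClosed_stateStabilizer [TopologicalSpace G] {ψ : M → E}
    (hγ : ∀ A, Continuous fun g => γ g A) (hψ : Continuous ψ) :
    IsClosed (stateStabilizer γ ψ) := by
  simp only [stateStabilizer, Set.ofPred_forall]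
  exact isClosed_iInter fun A => isClosed_eq (hψ.comp (hγ A)) continuous_const

theorem setOf_forall_ae_eq_eq_setOf_ae_mem_stateStabilizer {X : Type*} [MeasurableSpace X]
    {ν : Measure X} {ψ : X → M → E}
    (hA : DenseRange A) (hγ : ∀ g, Continuous (γ g)) (hψ : ∀ ξ, Continuous (ψ ξ)) :
    {g | ∀ B, ∀ᵐ ξ ∂ν, ψ ξ (γ g B) = ψ ξ B} = {g | ∀ᵐ ξ ∂ν, g ∈ stateStabilizer γ (ψ ξ)} := by
  ext g
  simp only [Set.mem_ofPred_eq]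
  refine ⟨fun h => (ae_all_iff.2 fun n => h (A n)).mono fun ξ hξ => ?_,
    fun h B => h.mono fun ξ hξ => hξ B⟩
  exact (mem_stateStabilizer_iff_of_denseRange hA (hγ g) (hψ ξ)).2 hξ

end

theorem measurableSet_setOf_nonempty_stateStabilizer_inter_closedBall [NormedAddCommGroup E]
    [SecondCountableTopology E] [MeasurableSpace E] [BorelSpace E] {X : Type*}
    [MeasurableSpace X] {ψ : X → M → E} [PseudoMetricSpace G] [CompactSpace G] {D : ℕ → G}
    (hD : DenseRange D) (hA : DenseRange A) (hγ : Continuous fun p : G × M => γ p.1 p.2)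
    (hψ : ∀ ξ, Continuous (ψ ξ)) (hψmeas : ∀ B, Measurable fun ξ => ψ ξ B) (c : G) (r : ℝ) :
    MeasurableSet {ξ | (stateStabilizer γ (ψ ξ) ∩ closedBall c r).Nonempty} := by
  have hγg : ∀ g, Continuous (γ g) := fun g => hγ.comp (continuous_const.prodMk continuous_id)
  have hK : ∀ ξ, stateStabilizer γ (ψ ξ) = {g | ∀ n, ψ ξ (γ g (A n)) - ψ ξ (A n) = 0} :=
    fun ξ => Set.ext fun g => by
      simpa only [Set.mem_ofPred_eq, sub_eq_zero] using
        mem_stateStabilizer_iff_of_denseRange hA (hγg g) (hψ ξ)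
  simp_rw [hK]
  refine measurableSet_setOf_nonempty_inter_closedBall hD (fun n ξ => ?_)
    (fun n g => (hψmeas _).sub (hψmeas _)) c r
  exact ((hψ ξ).comp (hγ.comp (continuous_id.prodMk continuous_const))).sub continuous_const

end Stabilizer

theorem statement12_general {d : ℕ} {X : Type*} [MeasurableSpace X]
    (ν : Measure X) [IsProbabilityMeasure ν]
    {F : Type*} [NormedRing F] [StarRing F] [NormedAlgebra ℂ F]
    [TopologicalSpace.SeparableSpace F]
    (T : (Fin d → ℤ) → X → X) (hT : ErgodicAction ν T)
    (α : (Fin d → ℤ) → F ≃⋆ₐ[ℂ] F)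
    {G : Type*} [Group G] [TopologicalSpace G] [CompactSpace G]
    [TopologicalSpace.MetrizableSpace G]
    (γ : G → F ≃⋆ₐ[ℂ] F)
    (hγcont : Continuous fun p : G × F => γ p.1 p.2)
    (hγα : ∀ g x A, γ g (α x A) = α x (γ g A))
    (φ : X → F →L[ℂ] ℂ) (hφ : IsStateField φ)
    (hequiv : Equivariant ν T (fun x A => α x A) φ)
    (Gφ : Set G)
    (hGφ : Gφ = {g : G | ∀ A : F, ∀ᵐ ξ ∂ν, φ ξ (γ g A) = φ ξ A}) :
    ∃ F₀ : Set X, MeasurableSet F₀ ∧ ν F₀ = 1 ∧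
      ∀ ξ ∈ F₀, {g : G | ∀ A : F, φ ξ (γ g A) = φ ξ A} = Gφ := by
  let : MetricSpace G := TopologicalSpace.metrizableSpaceMetric G
  have hγg : ∀ g, Continuous (γ g) := fun g => hγcont.comp (continuous_const.prodMk continuous_id)
  have hγA : ∀ B, Continuous fun g => γ g B :=
    fun B => hγcont.comp (continuous_id.prodMk continuous_const)
  have hA := TopologicalSpace.denseRange_denseSeq F
  have hD := TopologicalSpace.denseRange_denseSeq G
  set K : X → Set G := fun ξ => stateStabilizer (fun g => ⇑(γ g)) (φ ξ)
  have hinv : ∀ᵐ ξ ∂ν, ∀ x, K (T x ξ) = K ξ := by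
    filter_upwards [hequiv] with ξ hξ x
    have hφT : ⇑(φ (T x ξ)) = φ ξ ∘ α (-x) := funext fun B => by simpa using (hξ (-x) B).symm
    simp only [K, hφT]
    exact stateStabilizer_comp_equiv _ _ (α (-x) : F ≃ F) fun g B => hγα g (-x) B
  have hconst : ∀ᵐ ξ ∂ν, ∀ᵐ ξ' ∂ν, K ξ = K ξ' :=
    hT.ae_ae_eq_of_isClosed hD (fun ξ => isClosed_stateStabilizer hγA (φ ξ).continuous)
      (measurableSet_setOf_nonempty_stateStabilizer_inter_closedBall (γ := fun g => ⇑(γ g))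
        hD hA hγcont (fun ξ => (φ ξ).continuous) hφ.2) hinv
  obtain ⟨S, hS_ae, hS_meas, hS⟩ := (ae_eq_setOf_ae_mem_of_ae_ae_eq hconst).exists_measurable_mem
  refine ⟨S, hS_meas, (prob_compl_eq_zero_iff hS_meas).1 hS_ae, fun ξ hξ => ?_⟩
  rw [hGφ, setOf_forall_ae_eq_eq_setOf_ae_mem_stateStabilizer hA hγg fun ξ => (φ ξ).continuous]
  exact hS ξ hξ

/-- For an equivariant measurable field of states `{φ_ξ}`, there is a
full-measure measurable set `F₀` such that for every `ξ ∈ F₀` the stabilizer `G_{φ_ξ}` of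
the individual state equals the stabilizer `G_φ` of the field. -/
theorem statement12 {d : ℕ} (hd : 1 ≤ d)
    {X : Type*} [TopologicalSpace X] [CompactSpace X] [TopologicalSpace.MetrizableSpace X]
    [MeasurableSpace X] [BorelSpace X]
    (ν : Measure X) [IsProbabilityMeasure ν]
    {F : Type*} [NormedRing F] [StarRing F] [CStarRing F] [NormedAlgebra ℂ F]
    [StarModule ℂ F] [CompleteSpace F] [TopologicalSpace.SeparableSpace F]
    (T : (Fin d → ℤ) → X → X) (hT : ErgodicAction ν T)
    (α : (Fin d → ℤ) → F ≃⋆ₐ[ℂ] F)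
    (hα0 : ∀ A, α 0 A = A) (hαadd : ∀ x y A, α (x + y) A = α x (α y A))
    {G : Type*} [Group G] [TopologicalSpace G] [IsTopologicalGroup G] [CompactSpace G]
    [TopologicalSpace.MetrizableSpace G]
    (γ : G → F ≃⋆ₐ[ℂ] F)
    (hγ1 : ∀ A, γ 1 A = A) (hγmul : ∀ g h A, γ (g * h) A = γ g (γ h A))
    (hγcont : Continuous fun p : G × F => γ p.1 p.2)
    (hγα : ∀ g x A, γ g (α x A) = α x (γ g A))
    (φ : X → F →L[ℂ] ℂ) (hφ : IsStateField φ)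
    (hequiv : Equivariant ν T (fun x A => α x A) φ)
    (Gφ : Set G)
    (hGφ : Gφ = {g : G | ∀ A : F, ∀ᵐ ξ ∂ν, φ ξ (γ g A) = φ ξ A}) :
    ∃ F₀ : Set X, MeasurableSet F₀ ∧ ν F₀ = 1 ∧
      ∀ ξ ∈ F₀, {g : G | ∀ A : F, φ ξ (γ g A) = φ ξ A} = Gφ :=
  statement12_general ν T hT α γ hγcont hγα φ hφ hequiv Gφ hGφ
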